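/- Let π be a linear Poisson tensor on ℝ^N that does not depend on the variable x_p for some fixed 1 ≤ p ≤ N, and let c be a linear Casimir function for π. Then for every λ ∈ ℝ both of the following 2N×2N matrix fields on ℝ^{2N} are Poisson tensors: (a) the one with blocks Π^{xx}(x,y) = λ·π(y), Π^{xy}(x,y) = π(x) + c(x)·E_pp, Π^{yx}(x,y) = π(x) − c(x)·E_pp, Π^{yy}(x,y) = π(y); and (b) the one with blocks Π^{xx}(x,y) = λ·π(y), Π^{xy}(x,y) = π(x) + c(y)·E_pp, Π^{yx}(x,y) = π(x) − c(y)·E_pp, Π^{yy}(x,y) = π(y). -/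

import Mathlib

open scoped ContDiff

/-- Partial derivative `∂f/∂z_s` at `z`, for functions on `ℝ^ι`. -/
noncomputable def pd {ι : Type} [Fintype ι] [DecidableEq ι]
    (s : ι) (f : (ι → ℝ) → ℝ) (x : ι → ℝ) : ℝ :=
  fderiv ℝ f x (Pi.single s 1)

/-- A Poisson tensor on `ℝ^ι`: a smooth antisymmetric matrix field satisfying the
Jacobi condition. -/
def IsPoissonTensor {ι : Type} [Fintype ι] [DecidableEq ι]
    (π : (ι → ℝ) → Matrix ι ι ℝ) : Prop :=
  (∀ i j, ContDiff ℝ ∞ fun x => π x i j) ∧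
  (∀ x i j, π x j i = - π x i j) ∧
  (∀ x i j k, ∑ s, (pd s (fun y => π y i j) x * π x s k
      + pd s (fun y => π y k i) x * π x s j
      + pd s (fun y => π y j k) x * π x s i) = 0)

/-- `c` is a (smooth) Casimir function for `π`. -/
def IsCasimir {ι : Type} [Fintype ι] [DecidableEq ι]
    (π : (ι → ℝ) → Matrix ι ι ℝ) (c : (ι → ℝ) → ℝ) : Prop :=
  ContDiff ℝ ∞ c ∧ ∀ x j, ∑ s, pd s c x * π x s j = 0

/-- The matrix of partial derivatives `(∂π_{ij}/∂x_s)(x)`. -/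
noncomputable def pdMat {N : ℕ} (s : Fin N)
    (π : (Fin N → ℝ) → Matrix (Fin N) (Fin N) ℝ) (x : Fin N → ℝ) :
    Matrix (Fin N) (Fin N) ℝ :=
  Matrix.of fun i j => pd s (fun y => π y i j) x

/-- The `x`-part of a point `z = (x,y) ∈ ℝ^{2N}`. -/
def Xc {N : ℕ} (z : (Fin N ⊕ Fin N) → ℝ) : Fin N → ℝ := fun i => z (Sum.inl i)

/-- The `y`-part of a point `z = (x,y) ∈ ℝ^{2N}`. -/
def Yc {N : ℕ} (z : (Fin N ⊕ Fin N) → ℝ) : Fin N → ℝ := fun i => z (Sum.inr i)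

/-- A linear function `c(x) = ∑ s, a_s x_s`. -/
def IsLinearFun {N : ℕ} (c : (Fin N → ℝ) → ℝ) : Prop :=
  ∃ a : Fin N → ℝ, ∀ x, c x = ∑ s, a s * x s

/-- A linear (Lie–Poisson) tensor: `π_{ij}(x) = ∑ n, c^n_{ij} x_n`. -/
def IsLinearTensor {N : ℕ} (π : (Fin N → ℝ) → Matrix (Fin N) (Fin N) ℝ) : Prop :=
  ∃ C : Fin N → Fin N → Fin N → ℝ, ∀ x i j, π x i j = ∑ n, C i j n * x n

/-!
A linear tensor `π(x)ᵢⱼ = ∑ₙ Cᵢⱼⁿ xₙ` is Poisson exactly when `C` is a system of Lie structure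
constants: antisymmetric and with vanishing Jacobiator. Both block tensors are linear on
`ℝ^{2N}`; their structure constants are those of `𝔤 ⊗ ℝ[t]/(t² - λ)` (with `x ↔ t`, `y ↔ 1`),
deformed by `E_pp` times the coefficient vector of the Casimir. Block by block, their Jacobiator
is a combination of the Jacobiator of `C`, of the Casimir sums `∑ₛ aₛ Cₛⱼⁿ`, of the products
`Cᵢⱼˢ (E_pp)ₛₖ`, which vanish because `Cᵢⱼᵖ = 0` (`π` does not depend on `x_p`), and of the
cyclic expressions `(E_pp)ₖᵢ (E_pp)ₛⱼ - (E_pp)ⱼₖ (E_pp)ₛᵢ`, which vanish identically.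
-/

open Finset

section StructureConstants

variable {κ : Type} [Fintype κ]

def jacobiator (K : κ → κ → κ → ℝ) (i j k τ : κ) : ℝ :=
  ∑ σ, (K i j σ * K σ k τ + K k i σ * K σ j τ + K j k σ * K σ i τ)

def IsStructureConstants (K : κ → κ → κ → ℝ) : Prop :=
  (∀ i j τ, K j i τ = -K i j τ) ∧ ∀ i j k τ, jacobiator K i j k τ = 0

lemma jacobiator_rotate (K : κ → κ → κ → ℝ) (i j k τ : κ) :
    jacobiator K i j k τ = jacobiator K k i j τ :=
  sum_congr rfl fun _ _ => by ring

variable [DecidableEq κ]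

lemma pd_sum_mul (g : κ → ℝ) (s : κ) (z : κ → ℝ) :
    pd s (fun w => ∑ τ, g τ * w τ) z = g s := by
  have hderiv : HasFDerivAt (fun w : κ → ℝ => ∑ τ, g τ * w τ)
      (∑ τ, g τ • ContinuousLinearMap.proj τ : (κ → ℝ) →L[ℝ] ℝ) z :=
    HasFDerivAt.fun_sum fun τ _ => (hasFDerivAt_apply τ z).const_smul (g τ)
  simp [pd, hderiv.fderiv, Pi.single_apply]

variable {P : (κ → ℝ) → Matrix κ κ ℝ} {K : κ → κ → κ → ℝ}

lemma apply_single_of_linear (hK : ∀ z i j, P z i j = ∑ τ, K i j τ * z τ) (n i j : κ) :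
    P (Pi.single n 1) i j = K i j n :=
  (hK _ i j).trans (dotProduct_single_one _ n)

lemma pd_apply_of_linear (hK : ∀ z i j, P z i j = ∑ τ, K i j τ * z τ) (s : κ) (z : κ → ℝ)
    (i j : κ) : pd s (fun w => P w i j) z = K i j s := by
  simp only [hK]
  exact pd_sum_mul _ s z

theorem isPoissonTensor_iff_isStructureConstants (hK : ∀ z i j, P z i j = ∑ τ, K i j τ * z τ) :
    IsPoissonTensor P ↔ IsStructureConstants K := by
  constructor
  · rintro ⟨-, hanti, hjac⟩
    refine ⟨fun i j τ => ?_, fun i j k τ => ?_⟩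
    · simpa only [apply_single_of_linear hK] using hanti (Pi.single τ 1) i j
    · simpa only [jacobiator, pd_apply_of_linear hK, apply_single_of_linear hK] using
        hjac (Pi.single τ 1) i j k
  · rintro ⟨hanti, hjac⟩
    refine ⟨fun i j => ?_, fun z i j => ?_, fun z i j k => ?_⟩
    · simp only [hK]
      fun_prop
    · simp only [hK, hanti i j, neg_mul, sum_neg_distrib]
    · calc _ = ∑ σ, ∑ τ, (K i j σ * K σ k τ + K k i σ * K σ j τ + K j k σ * K σ i τ) * z τ := by
            simp only [pd_apply_of_linear hK]
            simp only [hK, mul_sum, ← sum_add_distrib]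
            exact sum_congr rfl fun σ _ => sum_congr rfl fun τ _ => by ring
        _ = ∑ τ, jacobiator K i j k τ * z τ := by
            rw [sum_comm]
            simp only [jacobiator, sum_mul]
        _ = 0 := by simp only [hjac, zero_mul, sum_const_zero]

lemma IsCasimir.sum_mul_eq_zero_of_linear (hK : ∀ z i j, P z i j = ∑ τ, K i j τ * z τ)
    {c : (κ → ℝ) → ℝ} {a : κ → ℝ} (ha : ∀ z, c z = ∑ s, a s * z s) (hc : IsCasimir P c)
    (j τ : κ) : ∑ s, a s * K s j τ = 0 := by
  have hpd : ∀ s z, pd s c z = a s := fun s z => by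
    rw [show c = fun w => ∑ s, a s * w s from funext ha]
    exact pd_sum_mul a s z
  simpa only [hpd, apply_single_of_linear hK] using hc.2 (Pi.single τ 1) j

end StructureConstants

section Double

variable {κ : Type} [DecidableEq κ]

lemma single_diag_apply_comm (p i j : κ) :
    Matrix.single p p (1 : ℝ) i j = Matrix.single p p 1 j i := by
  simp only [Matrix.single_apply, and_comm]

lemma single_diag_apply_mul_apply (p a b c d : κ) :
    Matrix.single p p (1 : ℝ) a b * Matrix.single p p 1 c d
      = Matrix.single p p 1 d a * Matrix.single p p 1 c b := by
  simp only [Matrix.single_apply, ite_zero_mul_ite_zero, one_mul]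
  congr 1
  grind

lemma mul_single_diag_apply_eq_zero {p : κ} {f : κ → ℝ} (hf : f p = 0) (s k : κ) :
    f s * Matrix.single p p 1 s k = 0 := by
  rcases eq_or_ne s p with rfl | hs
  · rw [hf, zero_mul]
  · simp [Ne.symm hs]

/-- Coefficient of `z_τ` in entry `(i, j)` of the block tensor built from the linear tensor with
constants `C`, where `Sum.inl` indexes the `x`-coordinates and `c(x, y) = ax ⬝ᵥ x + ay ⬝ᵥ y`. -/
def doubleConst (p : κ) (C : κ → κ → κ → ℝ) (ax ay : κ → ℝ) (lam : ℝ) :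
    κ ⊕ κ → κ ⊕ κ → κ ⊕ κ → ℝ
  | .inl i, .inl j => Sum.elim 0 (lam • C i j)
  | .inl i, .inr j => Sum.elim (C i j) 0 + Matrix.single p p (1 : ℝ) i j • Sum.elim ax ay
  | .inr i, .inl j => Sum.elim (C i j) 0 - Matrix.single p p (1 : ℝ) i j • Sum.elim ax ay
  | .inr i, .inr j => Sum.elim 0 (C i j)

variable {p : κ} {C : κ → κ → κ → ℝ} {ax ay : κ → ℝ} {lam : ℝ}

lemma doubleConst_antisymm (hC : ∀ i j τ, C j i τ = -C i j τ) (i j τ : κ ⊕ κ) :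
    doubleConst p C ax ay lam j i τ = -doubleConst p C ax ay lam i j τ := by
  rcases i with i | i <;> rcases j with j | j <;> rcases τ with τ | τ <;>
    simp only [doubleConst, Pi.add_apply, Pi.sub_apply, Pi.smul_apply, Sum.elim_inl,
      Sum.elim_inr, Pi.zero_apply, smul_eq_mul, hC j i,
      single_diag_apply_comm p j i] <;> ring

variable [Fintype κ]

lemma jacobiator_doubleConst_inl_inl_inl (hC : IsStructureConstants C) (hp : ∀ i j, C i j p = 0)
    (i j k : κ) (τ : κ ⊕ κ) :
    jacobiator (doubleConst p C ax ay lam) (.inl i) (.inl j) (.inl k) τ = 0 := by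
  have hE := fun i j => mul_single_diag_apply_eq_zero (hp i j)
  rcases τ with τ | τ <;>
    simp only [jacobiator, Fintype.sum_sum_type, doubleConst, Pi.sub_apply, Pi.smul_apply,
      Sum.elim_inl, Sum.elim_inr, Pi.zero_apply, smul_eq_mul, zero_mul, mul_zero, add_zero,
      zero_add, zero_sub, sum_const_zero]
  · calc _ = lam * jacobiator C i j k τ := by
          simp only [jacobiator, mul_sum]
          exact sum_congr rfl fun s _ => by
            linear_combination (-(lam * ax τ)) * (hE i j s k + hE k i s j + hE j k s i)
      _ = 0 := by rw [hC.2, mul_zero]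
  · exact sum_eq_zero fun s _ => by
      linear_combination (-(lam * ay τ)) * (hE i j s k + hE k i s j + hE j k s i)

lemma jacobiator_doubleConst_inl_inl_inr (hC : IsStructureConstants C)
    (hax : ∀ j τ, ∑ s, ax s * C s j τ = 0) (hay : ∀ j τ, ∑ s, ay s * C s j τ = 0)
    (i j k : κ) (τ : κ ⊕ κ) :
    jacobiator (doubleConst p C ax ay lam) (.inl i) (.inl j) (.inr k) τ = 0 := by
  have hEE := single_diag_apply_mul_apply p k i
  rcases τ with τ | τ <;>
    simp only [jacobiator, Fintype.sum_sum_type, doubleConst, Pi.add_apply, Pi.sub_apply,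
      Pi.smul_apply, Sum.elim_inl, Sum.elim_inr, Pi.zero_apply, smul_eq_mul, zero_mul, mul_zero,
      add_zero, zero_add, zero_sub, sum_const_zero]
  · calc _ = Matrix.single p p 1 j k * ∑ s, ay s * C s i τ
            - Matrix.single p p 1 k i * ∑ s, ay s * C s j τ := by
          simp only [mul_sum, ← sum_sub_distrib]
          exact sum_congr rfl fun s _ => by linear_combination (ay s * ax τ) * hEE s j
      _ = 0 := by rw [hay, hay]; ring
  · calc _ = lam * jacobiator C i j k τ + lam * Matrix.single p p 1 j k * ∑ s, ax s * C s i τ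
            - lam * Matrix.single p p 1 k i * ∑ s, ax s * C s j τ := by
          simp only [jacobiator, mul_sum, ← sum_add_distrib, ← sum_sub_distrib]
          exact sum_congr rfl fun s _ => by linear_combination (ay s * ay τ) * hEE s j
      _ = 0 := by rw [hC.2, hax, hax]; ring

lemma jacobiator_doubleConst_inl_inr_inr (hC : IsStructureConstants C) (hp : ∀ i j, C i j p = 0)
    (hax : ∀ j τ, ∑ s, ax s * C s j τ = 0) (hay : ∀ j τ, ∑ s, ay s * C s j τ = 0)
    (i j k : κ) (τ : κ ⊕ κ) :
    jacobiator (doubleConst p C ax ay lam) (.inl i) (.inr j) (.inr k) τ = 0 := by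
  have hE := fun i j => mul_single_diag_apply_eq_zero (hp i j)
  have hEE := single_diag_apply_mul_apply p i j
  rcases τ with τ | τ <;>
    simp only [jacobiator, Fintype.sum_sum_type, doubleConst, Pi.add_apply, Pi.sub_apply,
      Pi.smul_apply, Sum.elim_inl, Sum.elim_inr, Pi.zero_apply, smul_eq_mul, zero_mul, mul_zero,
      add_zero, zero_add, zero_sub]
  · calc _ = jacobiator C i j k τ + Matrix.single p p 1 i j * ∑ s, ax s * C s k τ
            - Matrix.single p p 1 k i * ∑ s, ax s * C s j τ := by
          simp only [jacobiator, mul_sum, ← sum_add_distrib, ← sum_sub_distrib]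
          exact sum_congr rfl fun s _ => by
            linear_combination ax τ * (hE i j s k + hE k i s j - hE j k s i)
              + (ax s * ax τ) * hEE s k
      _ = 0 := by rw [hC.2, hax, hax]; ring
  · calc _ = Matrix.single p p 1 i j * ∑ s, ay s * C s k τ
            - Matrix.single p p 1 k i * ∑ s, ay s * C s j τ := by
          simp only [mul_sum, ← sum_add_distrib, ← sum_sub_distrib]
          exact sum_congr rfl fun s _ => by
            linear_combination ay τ * (hE i j s k + hE k i s j - hE j k s i)
              + (ax s * ay τ) * hEE s k
      _ = 0 := by rw [hay, hay]; ring

lemma jacobiator_doubleConst_inr_inr_inr (hC : IsStructureConstants C) (i j k : κ) (τ : κ ⊕ κ) :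
    jacobiator (doubleConst p C ax ay lam) (.inr i) (.inr j) (.inr k) τ = 0 := by
  rcases τ with τ | τ <;>
    simp only [jacobiator, Fintype.sum_sum_type, doubleConst, Pi.add_apply, Pi.smul_apply,
      Sum.elim_inl, Sum.elim_inr, Pi.zero_apply, smul_eq_mul, zero_mul, mul_zero, add_zero,
      zero_add, sum_const_zero]
  exact hC.2 i j k τ

theorem isStructureConstants_doubleConst (hC : IsStructureConstants C) (hp : ∀ i j, C i j p = 0)
    (hax : ∀ j τ, ∑ s, ax s * C s j τ = 0) (hay : ∀ j τ, ∑ s, ay s * C s j τ = 0) :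
    IsStructureConstants (doubleConst p C ax ay lam) := by
  refine ⟨doubleConst_antisymm hC.1, ?_⟩
  rintro (i | i) (j | j) (k | k) τ
  · exact jacobiator_doubleConst_inl_inl_inl hC hp i j k τ
  · exact jacobiator_doubleConst_inl_inl_inr hC hax hay i j k τ
  · rw [jacobiator_rotate]
    exact jacobiator_doubleConst_inl_inl_inr hC hax hay k i j τ
  · exact jacobiator_doubleConst_inl_inr_inr hC hp hax hay i j k τ
  · rw [jacobiator_rotate, jacobiator_rotate]
    exact jacobiator_doubleConst_inl_inl_inr hC hax hay j k i τ
  · rw [jacobiator_rotate, jacobiator_rotate]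
    exact jacobiator_doubleConst_inl_inr_inr hC hp hax hay j k i τ
  · rw [jacobiator_rotate]
    exact jacobiator_doubleConst_inl_inr_inr hC hp hax hay k i j τ
  · exact jacobiator_doubleConst_inr_inr_inr hC i j k τ

end Double

section BlockTensor

variable {N : ℕ} {π : (Fin N → ℝ) → Matrix (Fin N) (Fin N) ℝ} {C : Fin N → Fin N → Fin N → ℝ}
  {p : Fin N} {ax ay : Fin N → ℝ} {g : ((Fin N ⊕ Fin N) → ℝ) → ℝ} {lam : ℝ}

lemma fromBlocks_apply_eq_sum_doubleConst (hπC : ∀ x i j, π x i j = ∑ n, C i j n * x n)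
    (hg : ∀ z, g z = ∑ s, ax s * Xc z s + ∑ s, ay s * Yc z s) (z : (Fin N ⊕ Fin N) → ℝ)
    (i j : Fin N ⊕ Fin N) :
    Matrix.fromBlocks (lam • π (Yc z)) (π (Xc z) + g z • Matrix.single p p (1 : ℝ))
        (π (Xc z) - g z • Matrix.single p p (1 : ℝ)) (π (Yc z)) i j
      = ∑ τ, doubleConst p C ax ay lam i j τ * z τ := by
  rcases i with i | i <;> rcases j with j | j <;>
    simp only [Fintype.sum_sum_type, doubleConst, Matrix.fromBlocks_apply₁₁,
      Matrix.fromBlocks_apply₁₂, Matrix.fromBlocks_apply₂₁, Matrix.fromBlocks_apply₂₂,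
      Matrix.add_apply, Matrix.sub_apply, Matrix.smul_apply, Pi.add_apply, Pi.sub_apply,
      Pi.smul_apply, Sum.elim_inl, Sum.elim_inr, Pi.zero_apply, smul_eq_mul, hπC, hg, Xc, Yc,
      add_mul, sub_mul, zero_mul, zero_add, mul_assoc, sum_add_distrib, sum_sub_distrib,
      sum_const_zero, ← mul_sum] <;>
    ring

theorem isPoissonTensor_fromBlocks (hπ : IsPoissonTensor π)
    (hπC : ∀ x i j, π x i j = ∑ n, C i j n * x n) (hp : ∀ x i j, pd p (fun y => π y i j) x = 0)
    (hax : ∀ j τ, ∑ s, ax s * C s j τ = 0) (hay : ∀ j τ, ∑ s, ay s * C s j τ = 0)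
    (hg : ∀ z, g z = ∑ s, ax s * Xc z s + ∑ s, ay s * Yc z s) :
    IsPoissonTensor fun z => Matrix.fromBlocks (lam • π (Yc z))
      (π (Xc z) + g z • Matrix.single p p (1 : ℝ)) (π (Xc z) - g z • Matrix.single p p (1 : ℝ))
      (π (Yc z)) := by
  have hC : IsStructureConstants C := (isPoissonTensor_iff_isStructureConstants hπC).1 hπ
  have hCp : ∀ i j, C i j p = 0 := fun i j =>
    (pd_apply_of_linear hπC p 0 i j).symm.trans (hp 0 i j)
  exact (isPoissonTensor_iff_isStructureConstants (fromBlocks_apply_eq_sum_doubleConst hπC hg)).2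
    (isStructureConstants_doubleConst hC hCp hax hay)

end BlockTensor

theorem stmt11_general {N : ℕ}
    (π : (Fin N → ℝ) → Matrix (Fin N) (Fin N) ℝ)
    (hπ : IsPoissonTensor π) (hlin : IsLinearTensor π)
    (p : Fin N) (hp : ∀ x i j, pd p (fun y => π y i j) x = 0)
    (c : (Fin N → ℝ) → ℝ) (hc : IsCasimir π c) (hclin : IsLinearFun c)
    (lam : ℝ) :
    IsPoissonTensor (fun z : (Fin N ⊕ Fin N) → ℝ =>
      Matrix.fromBlocks
        (lam • π (Yc z))
        (π (Xc z) + c (Xc z) • Matrix.single p p (1 : ℝ))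
        (π (Xc z) - c (Xc z) • Matrix.single p p (1 : ℝ))
        (π (Yc z))) ∧
    IsPoissonTensor (fun z : (Fin N ⊕ Fin N) → ℝ =>
      Matrix.fromBlocks
        (lam • π (Yc z))
        (π (Xc z) + c (Yc z) • Matrix.single p p (1 : ℝ))
        (π (Xc z) - c (Yc z) • Matrix.single p p (1 : ℝ))
        (π (Yc z))) := by
  obtain ⟨C, hπC⟩ := hlin
  obtain ⟨a, ha⟩ := hclin
  have hca : ∀ j τ, ∑ s, a s * C s j τ = 0 := hc.sum_mul_eq_zero_of_linear hπC ha
  have hc0 : ∀ j τ, ∑ s, (0 : Fin N → ℝ) s * C s j τ = 0 := by simp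
  exact ⟨isPoissonTensor_fromBlocks hπ hπC hp hca hc0 fun z => by simp [ha],
    isPoissonTensor_fromBlocks hπ hπC hp hc0 hca fun z => by simp [ha]⟩

/-- for a linear Poisson tensor `π` independent of `x_p` and a linear
Casimir `c`, both tensors `[[λπ(y), π(x)±c(x)E_pp],[…, π(y)]]` and
`[[λπ(y), π(x)±c(y)E_pp],[…, π(y)]]` are Poisson. -/
theorem stmt11 {N : ℕ} (hN : 1 ≤ N)
    (π : (Fin N → ℝ) → Matrix (Fin N) (Fin N) ℝ)
    (hπ : IsPoissonTensor π) (hlin : IsLinearTensor π)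
    (p : Fin N) (hp : ∀ x i j, pd p (fun y => π y i j) x = 0)
    (c : (Fin N → ℝ) → ℝ) (hc : IsCasimir π c) (hclin : IsLinearFun c)
    (lam : ℝ) :
    IsPoissonTensor (fun z : (Fin N ⊕ Fin N) → ℝ =>
      Matrix.fromBlocks
        (lam • π (Yc z))
        (π (Xc z) + c (Xc z) • Matrix.single p p (1 : ℝ))
        (π (Xc z) - c (Xc z) • Matrix.single p p (1 : ℝ))
        (π (Yc z))) ∧
    IsPoissonTensor (fun z : (Fin N ⊕ Fin N) → ℝ =>
      Matrix.fromBlocks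
        (lam • π (Yc z))
        (π (Xc z) + c (Yc z) • Matrix.single p p (1 : ℝ))
        (π (Xc z) - c (Yc z) • Matrix.single p p (1 : ℝ))
        (π (Yc z))) :=
  stmt11_general π hπ hlin p hp c hc hclin lam
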